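/- Let g be a doubling weight function and let u be a harmonic function on the unit disk with Fourier coefficients (a_j)_{j∈ℤ} satisfying |u(z)| ≤ K·g(1/(1−|z|)) for all z in the unit disk. Then there exists a constant C (depending on u, g, K) such that for every integer n ≥ 1 and every trigonometric polynomial P(θ) = ∑_{|j|≤n} c_j e^{ijθ} with complex coefficients, sup_{θ∈[0,2π]} |∑_{|j|≤n} a_j c_j e^{ijθ}| ≤ C · ((1/2π)∫_0^{2π} |P(φ)| dφ) · g(n). -/

import Mathlib

/-!
On the circle `|z| = r := 1 - 1/(2n)` we have `|u| ≤ K g(2n) ≤ K D g(n)`, and convolving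
`t ↦ u(r e^{it})` with `P` gives the trigonometric polynomial with coefficients
`a_j r^{|j|} c_j`, whose sup norm is at most `K g(2n) ‖P‖₁`. The factors `r^{|j|}` are removed by
convolving with a kernel whose coefficients are `s^{|j|}`, `s = 1/r`, for `|j| ≤ n`: the multiplier
`m_j = s^j` for `j ≤ n`, decreasing linearly to `0` at `2n`, is `∑ₖ Δ²m_k |D_k|²` with `D_k` the
Dirichlet sums `∑_{l ≤ k} e^{ilt}` (summation by parts), so its kernel has `L¹` norm at most
`2π ∑ₖ (k+1) |Δ²m_k|`, which is bounded by `9 · 2π` because `s^n ≤ 2`.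
-/

/-- A doubling weight function with doubling constant `D`: a positive, increasing,
continuous function on `[1,∞)` with `g(1) = 1`, `g(x) → ∞`, and `g(2x) ≤ D·g(x)`. -/
def IsDoublingWeight (g : ℝ → ℝ) (D : ℝ) : Prop :=
  ContinuousOn g (Set.Ici 1) ∧ MonotoneOn g (Set.Ici 1) ∧
  (∀ x : ℝ, 1 ≤ x → 0 < g x) ∧ g 1 = 1 ∧
  Filter.Tendsto g Filter.atTop Filter.atTop ∧
  (∀ x : ℝ, 1 ≤ x → g (2 * x) ≤ D * g x)

/-- `u` is the harmonic function on the unit disk whose Fourier coefficients are `a`,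
i.e. `u(r e^{iθ}) = ∑_{j ∈ ℤ} a_j r^{|j|} e^{ijθ}` with `a_{-j} = conj (a_j)`. -/
def HasFourierExpansion (u : ℂ → ℝ) (a : ℤ → ℂ) : Prop :=
  (∀ j : ℤ, a (-j) = starRingEnd ℂ (a j)) ∧
  ∀ r θ : ℝ, 0 ≤ r → r < 1 →
    HasSum (fun j : ℤ => a j * (r : ℂ) ^ j.natAbs * Complex.exp (Complex.I * (j : ℂ) * (θ : ℂ)))
      ((u ((r : ℂ) * Complex.exp (Complex.I * (θ : ℂ))) : ℂ))

open Complex (I exp)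
open scoped Real

noncomputable def trigPoly (S : Finset ℤ) (c : ℤ → ℂ) (t : ℝ) : ℂ :=
  ∑ j ∈ S, c j * exp (I * j * t)

section TrigPoly

lemma norm_exp_I_int_mul (j : ℤ) (t : ℝ) : ‖exp (I * j * t)‖ = 1 := by
  simp [Complex.norm_exp]

lemma norm_exp_neg_I_int_mul (j : ℤ) (t : ℝ) : ‖exp (-(I * j * t))‖ = 1 := by
  simp [Complex.norm_exp]

lemma exp_I_int_mul_sub (j : ℤ) (s t : ℝ) :
    exp (I * j * (s - t : ℝ)) = exp (I * j * s) * exp (-(I * j * t)) := by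
  rw [← Complex.exp_add]; push_cast; ring_nf

lemma integral_exp_I_int_mul (k : ℤ) :
    ∫ t in (0 : ℝ)..2 * π, exp (I * k * t) = if k = 0 then (2 * π : ℂ) else 0 := by
  split_ifs with hk
  · simp [hk]
  · have hc : I * k ≠ 0 := by simp [Complex.I_ne_zero, hk]
    rw [integral_exp_mul_complex hc, show I * k * (2 * π : ℝ) = k * (2 * π * I) by push_cast; ring,
      Complex.exp_int_mul_two_pi_mul_I]
    simp

lemma integral_exp_I_int_mul_mul_exp_neg (j k : ℤ) :
    ∫ t in (0 : ℝ)..2 * π, exp (I * j * t) * exp (-(I * k * t)) =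
      if j = k then (2 * π : ℂ) else 0 := by
  have h (t : ℝ) : exp (I * j * t) * exp (-(I * k * t)) = exp (I * (j - k : ℤ) * t) := by
    rw [← Complex.exp_add]; push_cast; ring_nf
  simp only [h, integral_exp_I_int_mul, sub_eq_zero]

variable (S : Finset ℤ) (c : ℤ → ℂ)

@[fun_prop]
lemma continuous_trigPoly : Continuous (trigPoly S c) := by
  unfold trigPoly; fun_prop

lemma periodic_trigPoly : Function.Periodic (trigPoly S c) (2 * π) := by
  intro t
  refine Finset.sum_congr rfl fun j _ => ?_
  rw [show I * j * (t + 2 * π : ℝ) = I * j * t + j * (2 * π * I) by push_cast; ring,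
    Complex.exp_add, Complex.exp_int_mul_two_pi_mul_I, mul_one]

lemma integral_trigPoly_mul_exp_neg (k : ℤ) :
    ∫ t in (0 : ℝ)..2 * π, trigPoly S c t * exp (-(I * k * t)) =
      if k ∈ S then (2 * π : ℂ) * c k else 0 := by
  have h (t : ℝ) : trigPoly S c t * exp (-(I * k * t)) =
      ∑ j ∈ S, c j * (exp (I * j * t) * exp (-(I * k * t))) := by
    simp only [trigPoly, Finset.sum_mul, mul_assoc]
  simp only [h]
  rw [intervalIntegral.integral_finsetSum fun j _ => by
    apply Continuous.intervalIntegrable; fun_prop]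
  simp only [intervalIntegral.integral_const_mul, integral_exp_I_int_mul_mul_exp_neg, mul_ite,
    mul_zero, Finset.sum_ite_eq']
  split_ifs <;> ring

end TrigPoly

section TrigSeries

variable {f : ℝ → ℂ} {b : ℤ → ℂ}

lemma continuous_of_hasSum_trig (hb : Summable fun j => ‖b j‖)
    (hf : ∀ t : ℝ, HasSum (fun j : ℤ => b j * exp (I * j * t)) (f t)) : Continuous f := by
  rw [show f = fun t : ℝ => ∑' j : ℤ, b j * exp (I * j * t) from
    funext fun t => (hf t).tsum_eq.symm]
  refine continuous_tsum (fun j => by fun_prop) hb fun j t => ?_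
  rw [norm_mul, norm_exp_I_int_mul, mul_one]

lemma integral_mul_exp_neg_of_hasSum_trig (hb : Summable fun j => ‖b j‖)
    (hf : ∀ t : ℝ, HasSum (fun j : ℤ => b j * exp (I * j * t)) (f t)) (k : ℤ) :
    ∫ t in (0 : ℝ)..2 * π, f t * exp (-(I * k * t)) = 2 * π * b k := by
  have hsum := intervalIntegral.hasSum_integral_of_dominated_convergence
    (μ := MeasureTheory.volume) (a := 0) (b := 2 * π) (f := fun t => f t * exp (-(I * k * t)))
    (F := fun j t => b j * (exp (I * j * t) * exp (-(I * k * t))))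
    (fun j _ => ‖b j‖) (fun j => (by fun_prop : Continuous _).aestronglyMeasurable)
    (fun j => MeasureTheory.ae_of_all _ fun t _ => by
      rw [norm_mul, norm_mul, norm_exp_I_int_mul, norm_exp_neg_I_int_mul, mul_one, mul_one])
    (MeasureTheory.ae_of_all _ fun _ _ => hb) intervalIntegrable_const
    (MeasureTheory.ae_of_all _ fun t _ => by
      simpa only [mul_assoc] using (hf t).mul_right (exp (-(I * k * t))))
  simp only [intervalIntegral.integral_const_mul, integral_exp_I_int_mul_mul_exp_neg, mul_ite,
    mul_zero] at hsum
  rw [hsum.unique (hasSum_single k fun j hj => if_neg hj), if_pos rfl, mul_comm]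

end TrigSeries

namespace HasFourierExpansion

variable {u : ℂ → ℝ} {a : ℤ → ℂ} (hu : HasFourierExpansion u a) {r : ℝ} (hr0 : 0 ≤ r) (hr1 : r < 1)
include hu hr0 hr1

lemma summable_norm_coeff_mul_pow : Summable fun j : ℤ => ‖a j * (r : ℂ) ^ j.natAbs‖ := by
  simpa using (hu.2 r 0 hr0 hr1).summable.norm

lemma continuous_circle : Continuous fun t : ℝ => (u (r * exp (I * t)) : ℂ) :=
  continuous_of_hasSum_trig (hu.summable_norm_coeff_mul_pow hr0 hr1) fun t => hu.2 r t hr0 hr1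

lemma integral_circle_mul_exp_neg (k : ℤ) :
    ∫ t in (0 : ℝ)..2 * π, (u (r * exp (I * t)) : ℂ) * exp (-(I * k * t)) =
      2 * π * (a k * (r : ℂ) ^ k.natAbs) :=
  integral_mul_exp_neg_of_hasSum_trig (hu.summable_norm_coeff_mul_pow hr0 hr1)
    (fun t => hu.2 r t hr0 hr1) k

end HasFourierExpansion

lemma norm_intervalIntegral_mul_le {f g : ℝ → ℂ} (hf : Continuous f) (hg : Continuous g)
    {B : ℝ} (hB : ∀ t, ‖g t‖ ≤ B) {x y : ℝ} (hxy : x ≤ y) :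
    ‖∫ t in x..y, f t * g t‖ ≤ (∫ t in x..y, ‖f t‖) * B := by
  calc ‖∫ t in x..y, f t * g t‖ ≤ ∫ t in x..y, ‖f t * g t‖ :=
        intervalIntegral.norm_integral_le_integral_norm hxy
    _ ≤ ∫ t in x..y, ‖f t‖ * B := by
        refine intervalIntegral.integral_mono_on hxy
          ((by fun_prop : Continuous _).intervalIntegrable _ _)
          ((by fun_prop : Continuous _).intervalIntegrable _ _) fun t _ => ?_
        rw [norm_mul]
        exact mul_le_mul_of_nonneg_left (hB t) (norm_nonneg _)
    _ = (∫ t in x..y, ‖f t‖) * B := intervalIntegral.integral_mul_const B _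

lemma Function.Periodic.intervalIntegral_comp_sub {h : ℝ → ℝ} {T : ℝ}
    (hh : Function.Periodic h T) (φ : ℝ) :
    ∫ t in (0 : ℝ)..T, h (φ - t) = ∫ t in (0 : ℝ)..T, h t := by
  have := hh.intervalIntegral_add_eq (φ - T) 0
  rw [sub_add_cancel, zero_add] at this
  rw [intervalIntegral.integral_comp_sub_left, sub_zero, this]

section Convolution

variable {f : ℝ → ℂ} {S : Finset ℤ} {b c : ℤ → ℂ}

lemma integral_mul_trigPoly_sub (hf : Continuous f)
    (hb : ∀ j ∈ S, ∫ t in (0 : ℝ)..2 * π, f t * exp (-(I * j * t)) = 2 * π * b j) (φ : ℝ) :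
    ∫ t in (0 : ℝ)..2 * π, f t * trigPoly S c (φ - t) =
      2 * π * trigPoly S (fun j => b j * c j) φ := by
  have h (t : ℝ) : f t * trigPoly S c (φ - t) =
      ∑ j ∈ S, c j * exp (I * j * φ) * (f t * exp (-(I * j * t))) := by
    simp only [trigPoly, Finset.mul_sum, exp_I_int_mul_sub]
    exact Finset.sum_congr rfl fun j _ => by ring
  simp only [h]
  rw [intervalIntegral.integral_finsetSum fun j _ => by
    apply Continuous.intervalIntegrable; fun_prop]
  simp only [intervalIntegral.integral_const_mul, trigPoly, Finset.mul_sum]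
  exact Finset.sum_congr rfl fun j hj => by rw [hb j hj]; ring

lemma norm_trigPoly_mul_eq (hf : Continuous f)
    (hb : ∀ j ∈ S, ∫ t in (0 : ℝ)..2 * π, f t * exp (-(I * j * t)) = 2 * π * b j) (φ : ℝ) :
    ‖trigPoly S (fun j => b j * c j) φ‖ =
      1 / (2 * π) * ‖∫ t in (0 : ℝ)..2 * π, f t * trigPoly S c (φ - t)‖ := by
  rw [integral_mul_trigPoly_sub hf hb, norm_mul,
    show (2 * π : ℂ) = ((2 * π : ℝ) : ℂ) by push_cast; rfl, Complex.norm_real, Real.norm_of_nonneg (by positivity)]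
  field_simp

lemma norm_trigPoly_mul_le_of_norm_le (hf : Continuous f)
    (hb : ∀ j ∈ S, ∫ t in (0 : ℝ)..2 * π, f t * exp (-(I * j * t)) = 2 * π * b j)
    {B : ℝ} (hB : ∀ t, ‖f t‖ ≤ B) (φ : ℝ) :
    ‖trigPoly S (fun j => b j * c j) φ‖ ≤
      B * (1 / (2 * π) * ∫ t in (0 : ℝ)..2 * π, ‖trigPoly S c t‖) := by
  have hP : Continuous fun t => trigPoly S c (φ - t) := by fun_prop
  have hconv := norm_intervalIntegral_mul_le hP hf hB (by positivity : (0 : ℝ) ≤ 2 * π)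
  have hper : Function.Periodic (fun t => ‖trigPoly S c t‖) (2 * π) := fun t =>
    congrArg norm (periodic_trigPoly S c t)
  rw [hper.intervalIntegral_comp_sub φ] at hconv
  simp only [mul_comm (trigPoly S c _) (f _)] at hconv
  rw [norm_trigPoly_mul_eq hf hb]
  calc 1 / (2 * π) * ‖∫ t in (0 : ℝ)..2 * π, f t * trigPoly S c (φ - t)‖
      ≤ 1 / (2 * π) * ((∫ t in (0 : ℝ)..2 * π, ‖trigPoly S c t‖) * B) := by gcongr
    _ = _ := by ring

lemma norm_trigPoly_mul_le_of_norm_trigPoly_le (hf : Continuous f)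
    (hb : ∀ j ∈ S, ∫ t in (0 : ℝ)..2 * π, f t * exp (-(I * j * t)) = 2 * π * b j)
    {B : ℝ} (hB : ∀ t, ‖trigPoly S c t‖ ≤ B) (φ : ℝ) :
    ‖trigPoly S (fun j => b j * c j) φ‖ ≤ (1 / (2 * π) * ∫ t in (0 : ℝ)..2 * π, ‖f t‖) * B := by
  rw [norm_trigPoly_mul_eq hf hb, mul_assoc]
  gcongr
  exact norm_intervalIntegral_mul_le hf (by fun_prop) (fun t => hB _) (by positivity)

end Convolution

section MultiplierKernel

def secondDiff (m : ℕ → ℝ) (k : ℕ) : ℝ := m k - 2 * m (k + 1) + m (k + 2)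

-- The truncated `(k + 1 - j : ℕ)` is `(k + 1 - j)₊`, the `j`-th coefficient of `|D_k|²`.
lemma sum_range_secondDiff_mul (m : ℕ → ℝ) {j N : ℕ} (hjN : j ≤ N) :
    ∑ k ∈ Finset.range N, secondDiff m k * ((k + 1 - j : ℕ) : ℝ) =
      m j - (N + 1 - j) * m N + (N - j) * m (N + 1) := by
  induction N, hjN using Nat.le_induction with
  | base =>
    rw [Finset.sum_eq_zero fun k hk => by
      rw [Nat.sub_eq_zero_of_le (Finset.mem_range.1 hk), Nat.cast_zero, mul_zero]]
    ring
  | succ N hjN ih =>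
    rw [Finset.sum_range_succ, ih, Nat.cast_sub (by omega : j ≤ N + 1), secondDiff]
    push_cast
    ring

lemma sum_range_secondDiff_mul_of_eq_zero {m : ℕ → ℝ} {j N : ℕ} (hjN : j ≤ N) (hN : m N = 0)
    (hN1 : m (N + 1) = 0) :
    ∑ k ∈ Finset.range N, secondDiff m k * ((k + 1 - j : ℕ) : ℝ) = m j := by
  rw [sum_range_secondDiff_mul m hjN, hN, hN1]
  ring

noncomputable def dirichletSum (k : ℕ) : ℝ → ℂ := trigPoly (Finset.Icc 0 k) 1

lemma card_filter_add_mem_Icc (k : ℕ) (j : ℤ) :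
    ((Finset.Icc (0 : ℤ) k).filter fun l => l + j ∈ Finset.Icc (0 : ℤ) k).card =
      k + 1 - j.natAbs := by
  rw [show (Finset.Icc (0 : ℤ) k).filter (fun l => l + j ∈ Finset.Icc (0 : ℤ) k) =
      Finset.Icc (max 0 (-j)) (min k (k - j)) by ext; simp only [Finset.mem_filter,
        Finset.mem_Icc, le_min_iff, max_le_iff]; omega, Int.card_Icc]
  omega

lemma integral_normSq_dirichletSum_mul_exp_neg (k : ℕ) (j : ℤ) :
    ∫ t in (0 : ℝ)..2 * π, (Complex.normSq (dirichletSum k t) : ℂ) * exp (-(I * j * t)) =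
      2 * π * ((k + 1 - j.natAbs : ℕ) : ℂ) := by
  have h (t : ℝ) : (Complex.normSq (dirichletSum k t) : ℂ) * exp (-(I * j * t)) =
      ∑ l ∈ Finset.Icc (0 : ℤ) k, dirichletSum k t * exp (-(I * (l + j : ℤ) * t)) := by
    rw [← Complex.mul_conj, dirichletSum, trigPoly, map_sum, Finset.mul_sum, Finset.sum_mul]
    refine Finset.sum_congr rfl fun l _ => ?_
    rw [Pi.one_apply, one_mul, ← Complex.exp_conj, mul_assoc, ← Complex.exp_add]
    congr 2
    simp only [map_mul, Complex.conj_I, Complex.conj_ofReal, map_intCast]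
    push_cast
    ring
  simp only [h]
  rw [intervalIntegral.integral_finsetSum fun l _ => by
    apply Continuous.intervalIntegrable; unfold dirichletSum; fun_prop]
  simp only [dirichletSum, integral_trigPoly_mul_exp_neg, Pi.one_apply, mul_one]
  rw [Finset.sum_ite, Finset.sum_const_zero, add_zero, Finset.sum_const, nsmul_eq_mul,
    card_filter_add_mem_Icc, mul_comm]

lemma integral_normSq_dirichletSum (k : ℕ) :
    ∫ t in (0 : ℝ)..2 * π, Complex.normSq (dirichletSum k t) = 2 * π * (k + 1) := by
  have h := integral_normSq_dirichletSum_mul_exp_neg k 0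
  simp only [Int.cast_zero, mul_zero, zero_mul, neg_zero, Complex.exp_zero, mul_one,
    Int.natAbs_zero, Nat.sub_zero, intervalIntegral.integral_ofReal] at h
  exact_mod_cast h

@[fun_prop]
lemma continuous_normSq_dirichletSum (k : ℕ) :
    Continuous fun t => Complex.normSq (dirichletSum k t) :=
  Complex.continuous_normSq.comp (continuous_trigPoly _ _)

noncomputable def multiplierKernel (m : ℕ → ℝ) (N : ℕ) (t : ℝ) : ℝ :=
  ∑ k ∈ Finset.range N, secondDiff m k * Complex.normSq (dirichletSum k t)

variable (m : ℕ → ℝ) (N : ℕ)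

@[fun_prop]
lemma continuous_multiplierKernel : Continuous (multiplierKernel m N) := by
  unfold multiplierKernel; fun_prop

lemma integral_multiplierKernel_mul_exp_neg (hN : m N = 0) (hN1 : m (N + 1) = 0) {j : ℤ}
    (hj : j.natAbs ≤ N) :
    ∫ t in (0 : ℝ)..2 * π, (multiplierKernel m N t : ℂ) * exp (-(I * j * t)) =
      2 * π * (m j.natAbs : ℂ) := by
  have h (t : ℝ) : (multiplierKernel m N t : ℂ) * exp (-(I * j * t)) =
      ∑ k ∈ Finset.range N,
        (secondDiff m k : ℂ) * ((Complex.normSq (dirichletSum k t) : ℂ) * exp (-(I * j * t))) := by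
    simp only [multiplierKernel, Complex.ofReal_sum, Complex.ofReal_mul, Finset.sum_mul, mul_assoc]
  simp only [h]
  rw [intervalIntegral.integral_finsetSum fun k _ => by
    apply Continuous.intervalIntegrable; fun_prop]
  simp only [intervalIntegral.integral_const_mul, integral_normSq_dirichletSum_mul_exp_neg]
  rw [← sum_range_secondDiff_mul_of_eq_zero hj hN hN1, Complex.ofReal_sum, Finset.mul_sum]
  push_cast
  exact Finset.sum_congr rfl fun k _ => by ring

lemma integral_abs_multiplierKernel_le :
    ∫ t in (0 : ℝ)..2 * π, |multiplierKernel m N t| ≤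
      2 * π * ∑ k ∈ Finset.range N, (k + 1) * |secondDiff m k| := by
  calc ∫ t in (0 : ℝ)..2 * π, |multiplierKernel m N t|
      ≤ ∫ t in (0 : ℝ)..2 * π,
          ∑ k ∈ Finset.range N, |secondDiff m k| * Complex.normSq (dirichletSum k t) := by
        refine intervalIntegral.integral_mono_on (by positivity)
          ((by fun_prop : Continuous _).intervalIntegrable _ _)
          ((by fun_prop : Continuous _).intervalIntegrable _ _) fun t _ => ?_
        refine (Finset.abs_sum_le_sum_abs _ _).trans_eq (Finset.sum_congr rfl fun k _ => ?_)
        rw [abs_mul, abs_of_nonneg (Complex.normSq_nonneg _)]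
    _ = 2 * π * ∑ k ∈ Finset.range N, (k + 1) * |secondDiff m k| := by
        rw [intervalIntegral.integral_finsetSum fun k _ => by
          apply Continuous.intervalIntegrable; fun_prop, Finset.mul_sum]
        exact Finset.sum_congr rfl fun k _ => by
          rw [intervalIntegral.integral_const_mul, integral_normSq_dirichletSum]; ring

end MultiplierKernel

section TrapezoidMultiplier

noncomputable def trapezoidMultiplier (s : ℝ) (n j : ℕ) : ℝ :=
  if j ≤ n then s ^ j else s ^ n * max 0 (2 * (n : ℝ) - j) / n

lemma max_zero_secondDiff_nonneg (a b : ℝ) :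
    0 ≤ max 0 (a - b) - 2 * max 0 (a - (b + 1)) + max 0 (a - (b + 2)) := by
  simp only [max_def]
  split_ifs <;> linarith

variable {s : ℝ} {n : ℕ}

lemma trapezoidMultiplier_of_le {j : ℕ} (hj : j ≤ n) : trapezoidMultiplier s n j = s ^ j :=
  if_pos hj

lemma trapezoidMultiplier_of_ge (hn : 1 ≤ n) {j : ℕ} (hj : n ≤ j) :
    trapezoidMultiplier s n j = s ^ n * max 0 (2 * (n : ℝ) - j) / n := by
  rcases hj.eq_or_lt with rfl | hj
  · have : (0 : ℝ) < n := by exact_mod_cast hn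
    rw [trapezoidMultiplier_of_le le_rfl, max_eq_right (by linarith)]
    field_simp
    ring
  · exact if_neg (not_le.2 hj)

lemma trapezoidMultiplier_eq_zero (hn : 1 ≤ n) {j : ℕ} (hj : 2 * n ≤ j) :
    trapezoidMultiplier s n j = 0 := by
  have : (2 * n : ℝ) ≤ j := by exact_mod_cast hj
  rw [trapezoidMultiplier_of_ge hn (by omega), max_eq_left (by linarith), mul_zero, zero_div]

lemma secondDiff_trapezoidMultiplier_nonneg (hn : 1 ≤ n) (hs : 1 ≤ s) {k : ℕ} (hk : k + 1 ≠ n) :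
    0 ≤ secondDiff (trapezoidMultiplier s n) k := by
  rw [secondDiff]
  by_cases hkn : k + 2 ≤ n
  · rw [trapezoidMultiplier_of_le hkn, trapezoidMultiplier_of_le (by omega),
      trapezoidMultiplier_of_le (by omega)]
    have : s ^ k - 2 * s ^ (k + 1) + s ^ (k + 2) = s ^ k * (s - 1) ^ 2 := by ring
    rw [this]
    have := zero_le_one.trans hs
    positivity
  · rw [trapezoidMultiplier_of_ge hn (by omega), trapezoidMultiplier_of_ge hn (by omega),
      trapezoidMultiplier_of_ge hn (by omega)]
    push_cast
    have hconvex := max_zero_secondDiff_nonneg (2 * n) k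
    have hscale : 0 ≤ s ^ n / n := by positivity
    calc (0 : ℝ) ≤ s ^ n / n * (max 0 (2 * (n : ℝ) - k) - 2 * max 0 (2 * (n : ℝ) - (k + 1)) +
          max 0 (2 * (n : ℝ) - (k + 2))) := mul_nonneg hscale hconvex
      _ = _ := by ring

lemma mul_secondDiff_trapezoidMultiplier_pred (k : ℕ) :
    (k + 1) * secondDiff (trapezoidMultiplier s (k + 1)) k =
      -(s ^ k * ((k + 1) * (s - 1)) + s ^ (k + 1)) := by
  rw [secondDiff, trapezoidMultiplier_of_le (by omega), trapezoidMultiplier_of_le le_rfl,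
    trapezoidMultiplier_of_ge (by omega) (by omega), max_eq_right (by push_cast; linarith)]
  have : (0 : ℝ) < k + 1 := by positivity
  push_cast
  field_simp
  ring

lemma mul_abs_sub_secondDiff_trapezoidMultiplier_pred_le {k : ℕ} (hs : 1 ≤ s)
    (hsn : s ^ (k + 1) ≤ 2) :
    (k + 1) * (|secondDiff (trapezoidMultiplier s (k + 1)) k| -
      secondDiff (trapezoidMultiplier s (k + 1)) k) ≤ 8 := by
  set m := trapezoidMultiplier s (k + 1)
  have hbern : (k + 1) * (s - 1) ≤ 1 := by
    have := one_add_mul_le_pow (show -2 ≤ s - 1 by linarith) (k + 1)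
    rw [add_sub_cancel] at this
    push_cast at this
    linarith
  have hsk : s ^ k ≤ 2 := (pow_le_pow_right₀ hs (Nat.le_succ k)).trans hsn
  have hβ := mul_secondDiff_trapezoidMultiplier_pred (s := s) k
  have hk : (0 : ℝ) < k + 1 := by positivity
  have hβneg : secondDiff m k ≤ 0 := by
    refine nonpos_of_mul_nonpos_right ?_ hk
    rw [hβ, neg_nonpos]
    have := zero_le_one.trans hs
    have : 0 ≤ s - 1 := by linarith
    positivity
  have := zero_le_one.trans hs
  calc ((k : ℝ) + 1) * (|secondDiff m k| - secondDiff m k) = -2 * ((k + 1) * secondDiff m k) := by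
        rw [abs_of_nonpos hβneg]; ring
    _ = 2 * (s ^ k * ((k + 1) * (s - 1)) + s ^ (k + 1)) := by rw [hβ]; ring
    _ ≤ 2 * (s ^ k * 1 + 2) := by gcongr
    _ ≤ 8 := by linarith

lemma sum_mul_abs_secondDiff_trapezoidMultiplier_le (hn : 1 ≤ n) (hs : 1 ≤ s)
    (hsn : s ^ n ≤ 2) :
    ∑ k ∈ Finset.range (2 * n), (k + 1) * |secondDiff (trapezoidMultiplier s n) k| ≤ 9 := by
  -- `∑ (k + 1) Δ²m_k = m_0 = 1`, and `Δ²m_k` is negative only at the junction `k = n - 1`.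
  obtain ⟨k, rfl⟩ : ∃ k, n = k + 1 := ⟨n - 1, by omega⟩
  set m := trapezoidMultiplier s (k + 1)
  have hmass : ∑ i ∈ Finset.range (2 * (k + 1)), (i + 1) * secondDiff m i = 1 := by
    have := sum_range_secondDiff_mul_of_eq_zero (m := m) (Nat.zero_le (2 * (k + 1)))
      (trapezoidMultiplier_eq_zero hn le_rfl) (trapezoidMultiplier_eq_zero hn (by omega))
    simp only [Nat.sub_zero, Nat.cast_add, Nat.cast_one] at this
    have hm0 : m 0 = 1 := (trapezoidMultiplier_of_le (Nat.zero_le _)).trans (pow_zero s)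
    simpa only [mul_comm, hm0] using this
  have hdefect : ∑ i ∈ Finset.range (2 * (k + 1)),
      (i + 1) * (|secondDiff m i| - secondDiff m i) ≤ 8 := by
    rw [Finset.sum_eq_single k (fun i _ hi => by
      rw [abs_of_nonneg (secondDiff_trapezoidMultiplier_nonneg hn hs (by omega)), sub_self,
        mul_zero]) (by simp; omega)]
    exact mul_abs_sub_secondDiff_trapezoidMultiplier_pred_le hs hsn
  calc ∑ i ∈ Finset.range (2 * (k + 1)), (i + 1) * |secondDiff m i|
      = ∑ i ∈ Finset.range (2 * (k + 1)), (i + 1) * secondDiff m i +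
          ∑ i ∈ Finset.range (2 * (k + 1)), (i + 1) * (|secondDiff m i| - secondDiff m i) := by
        rw [← Finset.sum_add_distrib]
        exact Finset.sum_congr rfl fun i _ => by ring
    _ ≤ 9 := by linarith

end TrapezoidMultiplier

lemma norm_trigPoly_le_of_dilation {n : ℕ} (hn : 1 ≤ n) {r : ℝ} (hr0 : 0 < r) (hr1 : r ≤ 1)
    (hrn : 1 / 2 ≤ r ^ n) {c : ℤ → ℂ} {B : ℝ}
    (hB : ∀ t, ‖trigPoly (Finset.Icc (-n) n) (fun j => (r : ℂ) ^ j.natAbs * c j) t‖ ≤ B)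
    (θ : ℝ) : ‖trigPoly (Finset.Icc (-n) n) c θ‖ ≤ 9 * B := by
  set s := r⁻¹
  have hs : 1 ≤ s := one_le_inv₀ hr0 |>.2 hr1
  have hsn : s ^ n ≤ 2 := by
    rw [inv_pow]
    exact inv_le_of_inv_le₀ (by norm_num) (by linarith)
  set W := multiplierKernel (trapezoidMultiplier s n) (2 * n)
  have hcoeff : ∀ j ∈ Finset.Icc (-(n : ℤ)) n,
      ∫ t in (0 : ℝ)..2 * π, (W t : ℂ) * exp (-(I * j * t)) = 2 * π * (s : ℂ) ^ j.natAbs := by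
    intro j hj
    have hjn : j.natAbs ≤ n := by rw [Finset.mem_Icc] at hj; omega
    rw [integral_multiplierKernel_mul_exp_neg _ _ (trapezoidMultiplier_eq_zero hn le_rfl)
      (trapezoidMultiplier_eq_zero hn (by omega)) (by omega), trapezoidMultiplier_of_le hjn]
    push_cast
    rfl
  have hsr : c = fun j => (s : ℂ) ^ j.natAbs * ((r : ℂ) ^ j.natAbs * c j) := by
    funext j
    rw [← mul_assoc, ← mul_pow, ← Complex.ofReal_mul, inv_mul_cancel₀ hr0.ne', Complex.ofReal_one,
      one_pow, one_mul]
  have hW : ∫ t in (0 : ℝ)..2 * π, ‖(W t : ℂ)‖ ≤ 2 * π * 9 := by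
    simp only [Complex.norm_real, Real.norm_eq_abs]
    refine (integral_abs_multiplierKernel_le _ _).trans ?_
    gcongr
    exact sum_mul_abs_secondDiff_trapezoidMultiplier_le hn hs hsn
  have hB0 : 0 ≤ B := (norm_nonneg _).trans (hB 0)
  calc ‖trigPoly (Finset.Icc (-n) n) c θ‖
      ≤ (1 / (2 * π) * ∫ t in (0 : ℝ)..2 * π, ‖(W t : ℂ)‖) * B := by
        rw [hsr]
        exact norm_trigPoly_mul_le_of_norm_trigPoly_le (by fun_prop) hcoeff hB θ
    _ ≤ 1 / (2 * π) * (2 * π * 9) * B := by gcongr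
    _ = 9 * B := by field_simp

lemma HasFourierExpansion.norm_trigPoly_le {u : ℂ → ℝ} {a : ℤ → ℂ} (hu : HasFourierExpansion u a)
    {r : ℝ} (hr0 : 0 ≤ r) (hr1 : r < 1) {B : ℝ} (hB : ∀ t : ℝ, |u (r * exp (I * t))| ≤ B)
    (S : Finset ℤ) (c : ℤ → ℂ) (φ : ℝ) :
    ‖trigPoly S (fun j => (r : ℂ) ^ j.natAbs * (a j * c j)) φ‖ ≤
      B * (1 / (2 * π) * ∫ t in (0 : ℝ)..2 * π, ‖trigPoly S c t‖) := by
  have h := norm_trigPoly_mul_le_of_norm_le (hu.continuous_circle hr0 hr1) (S := S) (c := c)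
    (fun j _ => hu.integral_circle_mul_exp_neg hr0 hr1 j)
    (fun t => by rw [Complex.norm_real, Real.norm_eq_abs]; exact hB t) φ
  rwa [show (fun j => (r : ℂ) ^ j.natAbs * (a j * c j)) = fun j => a j * (r : ℂ) ^ j.natAbs * c j
    from funext fun j => by ring]

lemma half_le_one_sub_inv_two_mul_pow {n : ℕ} (hn : 1 ≤ n) :
    1 / 2 ≤ (1 - 1 / (2 * n) : ℝ) ^ n := by
  have hn' : (1 : ℝ) ≤ n := by exact_mod_cast hn
  have hbern := one_add_mul_le_pow (a := -(1 / (2 * n) : ℝ)) (by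
    rw [neg_le_neg_iff, div_le_iff₀ (by linarith)]
    linarith) n
  rw [← sub_eq_add_neg] at hbern
  calc (1 / 2 : ℝ) = 1 + n * -(1 / (2 * n)) := by field_simp; ring
    _ ≤ _ := hbern

theorem growth_convolution_bound (g : ℝ → ℝ) (D : ℝ) (hg : IsDoublingWeight g D)
    (u : ℂ → ℝ) (a : ℤ → ℂ) (hu : HasFourierExpansion u a)
    (K : ℝ) (hbound : ∀ z : ℂ, ‖z‖ < 1 → |u z| ≤ K * g (1 / (1 - ‖z‖))) :
    ∃ C : ℝ, ∀ n : ℕ, 1 ≤ n → ∀ c : ℤ → ℂ, ∀ θ : ℝ,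
      ‖∑ j ∈ Finset.Icc (-(n : ℤ)) (n : ℤ),
          a j * c j * Complex.exp (Complex.I * (j : ℂ) * (θ : ℂ))‖
        ≤ C * ((1 / (2 * Real.pi)) * ∫ φ in (0 : ℝ)..(2 * Real.pi),
            ‖∑ j ∈ Finset.Icc (-(n : ℤ)) (n : ℤ),
              c j * Complex.exp (Complex.I * (j : ℂ) * (φ : ℂ))‖) * g (n : ℝ) := by
  obtain ⟨-, -, -, hg1, -, hgdbl⟩ := hg
  have hK : 0 ≤ K := by simpa [hg1] using (abs_nonneg _).trans (hbound 0 (by simp))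
  refine ⟨9 * K * D, fun n hn c θ => ?_⟩
  have hn' : (1 : ℝ) ≤ n := by exact_mod_cast hn
  set r : ℝ := 1 - 1 / (2 * n)
  have hr0 : 0 < r := by
    have : 1 / (2 * n : ℝ) ≤ 1 / 2 := by gcongr; linarith
    linarith
  have hr1 : r < 1 := by simp only [r]; linarith [show 0 < 1 / (2 * n : ℝ) by positivity]
  have hcircle (t : ℝ) : |u (r * exp (I * t))| ≤ K * g (2 * n) := by
    have hz : ‖(r : ℂ) * exp (I * t)‖ = r := by
      rw [norm_mul, Complex.norm_real, Real.norm_of_nonneg hr0.le, mul_comm I,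
        Complex.norm_exp_ofReal_mul_I, mul_one]
    have h := hbound _ (hz ▸ hr1)
    rwa [hz, show 1 / (1 - r) = 2 * n by simp only [r, sub_sub_cancel, one_div_one_div]] at h
  set L := 1 / (2 * π) * ∫ φ in (0 : ℝ)..2 * π, ‖trigPoly (Finset.Icc (-n) n) c φ‖
  have hL : 0 ≤ L := by
    have : 0 ≤ ∫ φ in (0 : ℝ)..2 * π, ‖trigPoly (Finset.Icc (-n) n) c φ‖ :=
      intervalIntegral.integral_nonneg (by positivity) fun _ _ => norm_nonneg _
    positivity
  change ‖trigPoly (Finset.Icc (-n) n) (fun j => a j * c j) θ‖ ≤ 9 * K * D * L * g n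
  calc ‖trigPoly (Finset.Icc (-n) n) (fun j => a j * c j) θ‖
      ≤ 9 * (K * g (2 * n) * L) := norm_trigPoly_le_of_dilation hn hr0 hr1.le
        (half_le_one_sub_inv_two_mul_pow hn)
        (fun t => hu.norm_trigPoly_le hr0.le hr1 hcircle _ c t) θ
    _ ≤ 9 * (K * (D * g n) * L) := by gcongr; exact hgdbl n hn'
    _ = 9 * K * D * L * g n := by ring
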